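/- arXiv:2204.12009 — 9 statements merged into one kernel-verified Lean document; each statement's English description precedes it below -/
import Mathlib

section
/- Let K ≥ 1, N > 1, and 0 < η ≤ 1/(2K²). Suppose α, β, γ, a, b ∈ ℝ satisfy |α| ≤ Kη/N, |β| ≤ Kη/N, 1/(KN) ≤ |γ| ≤ K/N, |a| ≤ Kη/N, and |b| ≤ Kη/N. Then the linear system αx + γy + a = 0, γx + βy + b = 0 has a unique solution (x_c, y_c), and it satisfies |x_c| ≤ 4K⁴η and |y_c| ≤ 4K⁴η. -/
open Real

set_option maxHeartbeats 800000

/-- Proposition 2.4(i), location of the hyperbola's center: the linear system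
`αx + γy + a = 0`, `γx + βy + b = 0` has a unique solution `(x_c, y_c)`,
which satisfies `|x_c| ≤ 4K⁴η`, `|y_c| ≤ 4K⁴η`. -/
theorem stmt9 (K N η α β γ a b : ℝ) (hK : 1 ≤ K) (hN : 1 < N) (hη0 : 0 < η)
    (hη : η ≤ 1 / (2 * K ^ 2))
    (hα : |α| ≤ K * η / N) (hβ : |β| ≤ K * η / N)
    (hγ1 : 1 / (K * N) ≤ |γ|) (hγ2 : |γ| ≤ K / N)
    (ha : |a| ≤ K * η / N) (hb : |b| ≤ K * η / N) :
    ∃ xc yc : ℝ,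
      (α * xc + γ * yc + a = 0 ∧ γ * xc + β * yc + b = 0) ∧
      |xc| ≤ 4 * K ^ 4 * η ∧ |yc| ≤ 4 * K ^ 4 * η ∧
      ∀ x y : ℝ, α * x + γ * y + a = 0 → γ * x + β * y + b = 0 →
        x = xc ∧ y = yc := by
  have hN0 : (0:ℝ) < N := by linarith
  have hK0 : (0:ℝ) < K := by linarith
  have hg0 : 0 < |γ| := lt_of_lt_of_le (by positivity) hγ1
  have hη' : 2 * K ^ 2 * η ≤ 1 := by
    have h := (le_div_iff₀ (by positivity : (0:ℝ) < 2 * K ^ 2)).mp hη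
    nlinarith
  have hγ1' : 1 ≤ |γ| * (K * N) := (div_le_iff₀ (by positivity)).mp hγ1
  -- K*η/N ≤ |γ|/2
  have hKη : K * η / N ≤ |γ| / 2 := by
    rw [div_le_div_iff₀ hN0 (by norm_num : (0:ℝ) < 2)]
    nlinarith [mul_pos hK0 hN0, mul_le_mul_of_nonneg_left hη' (le_of_lt hg0),
      mul_le_mul_of_nonneg_left hγ1' (by positivity : (0:ℝ) ≤ 2 * K * η)]
  have hα2 : |α| ≤ |γ| / 2 := hα.trans hKη
  have hβ2 : |β| ≤ |γ| / 2 := hβ.trans hKη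
  set D := α * β - γ ^ 2 with hDdef
  have habD : |α * β| ≤ γ ^ 2 / 4 := by
    rw [abs_mul]
    nlinarith [abs_nonneg α, abs_nonneg β, sq_abs γ]
  have hD : 3 / 4 * γ ^ 2 ≤ |D| := by
    have h1 : |γ ^ 2| - |α * β| ≤ |γ ^ 2 - α * β| := abs_sub_abs_le_abs_sub _ _
    rw [abs_sub_comm, abs_of_nonneg (sq_nonneg γ)] at h1
    rw [hDdef]
    linarith
  have hDpos : 0 < |D| :=
    lt_of_lt_of_le (by nlinarith [sq_abs γ] : (0:ℝ) < 3 / 4 * γ ^ 2) hD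
  have hD0 : D ≠ 0 := fun h => by simp [h] at hDpos
  have hkey : |γ| * (K * η / N) + K * η / N * (|γ| / 2) ≤ 4 * K ^ 4 * η * (3 / 4 * γ ^ 2) := by
    have heq : |γ| * (K * η / N) + K * η / N * (|γ| / 2) = 3 / 2 * |γ| * K * η / N := by ring
    rw [heq, div_le_iff₀ hN0]
    have h5 : |γ| ≤ K * N * γ ^ 2 := by
      nlinarith [mul_le_mul_of_nonneg_left hγ1' hg0.le, sq_abs γ]
    have hK4 : K ^ 2 ≤ K ^ 4 := pow_le_pow_right₀ (by linarith) (by norm_num)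
    have t0 : (0:ℝ) ≤ η * γ ^ 2 * N := by positivity
    nlinarith [mul_le_mul_of_nonneg_right h5 (by positivity : (0:ℝ) ≤ 3 / 2 * K * η),
      mul_le_mul_of_nonneg_right hK4 t0]
  refine ⟨(γ * b - a * β) / D, (a * γ - α * b) / D, ⟨?_, ?_⟩, ?_, ?_, ?_⟩
  · field_simp
    ring
  · field_simp
    ring
  · rw [abs_div, div_le_iff₀ hDpos]
    have hnum : |γ * b - a * β| ≤ |γ| * (K * η / N) + K * η / N * (|γ| / 2) := by
      calc |γ * b - a * β| ≤ |γ * b| + |a * β| := abs_sub (γ * b) (a * β)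
        _ = |γ| * |b| + |a| * |β| := by rw [abs_mul, abs_mul]
        _ ≤ |γ| * (K * η / N) + K * η / N * (|γ| / 2) := by gcongr
    calc |γ * b - a * β| ≤ 4 * K ^ 4 * η * (3 / 4 * γ ^ 2) := hnum.trans hkey
      _ ≤ 4 * K ^ 4 * η * |D| := by gcongr
  · rw [abs_div, div_le_iff₀ hDpos]
    have hnum : |a * γ - α * b| ≤ |γ| * (K * η / N) + K * η / N * (|γ| / 2) := by
      calc |a * γ - α * b| ≤ |a * γ| + |α * b| := abs_sub (a * γ) (α * b)
        _ = |γ| * |a| + |b| * |α| := by rw [abs_mul, abs_mul]; ring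
        _ ≤ |γ| * (K * η / N) + K * η / N * (|γ| / 2) := by gcongr
    calc |a * γ - α * b| ≤ 4 * K ^ 4 * η * (3 / 4 * γ ^ 2) := hnum.trans hkey
      _ ≤ 4 * K ^ 4 * η * |D| := by gcongr
  · intro x y h1 h2
    constructor
    · rw [eq_div_iff hD0]
      linear_combination β * h1 - γ * h2
    · rw [eq_div_iff hD0]
      linear_combination α * h2 - γ * h1
end

section
/- Let K ≥ 1, N > 1, and 0 < η ≤ 1/(16K⁶). Suppose α, β, γ, a, b, c ∈ ℝ satisfy |α| ≤ Kη/N, |β| ≤ Kη/N, 1/(KN) ≤ |γ| ≤ K/N, |a| ≤ Kη/N, |b| ≤ Kη/N, and η/(KN) ≤ |c| ≤ Kη/N. Let (x_c, y_c) be the unique solution of αx + γy + a = 0, γx + βy + b = 0, and let P₀ = P(x_c, y_c) where P(x,y) = αx² + 2γxy + βy² + 2ax + 2by + c. Then |P₀ − c| ≤ 8K⁵η²/N, and consequently η/(2KN) ≤ |P₀| ≤ 2Kη/N. -/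
open Real

/-- Estimate on the constant term `P₀ = P(x_c, y_c)` in Proposition 2.4(i):
`|P₀ − c| ≤ 8K⁵η²/N`, hence `η/(2KN) ≤ |P₀| ≤ 2Kη/N`. -/
theorem stmt10 (K N η α β γ a b c xc yc : ℝ) (hK : 1 ≤ K) (hN : 1 < N)
    (hη0 : 0 < η) (hη : η ≤ 1 / (16 * K ^ 6))
    (hα : |α| ≤ K * η / N) (hβ : |β| ≤ K * η / N)
    (hγ1 : 1 / (K * N) ≤ |γ|) (hγ2 : |γ| ≤ K / N)
    (ha : |a| ≤ K * η / N) (hb : |b| ≤ K * η / N)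
    (hc1 : η / (K * N) ≤ |c|) (hc2 : |c| ≤ K * η / N)
    (hxc : α * xc + γ * yc + a = 0) (hyc : γ * xc + β * yc + b = 0) :
    |(α * xc ^ 2 + 2 * γ * xc * yc + β * yc ^ 2 + 2 * a * xc + 2 * b * yc + c) - c|
        ≤ 8 * K ^ 5 * η ^ 2 / N ∧
    η / (2 * K * N)
        ≤ |α * xc ^ 2 + 2 * γ * xc * yc + β * yc ^ 2 + 2 * a * xc + 2 * b * yc + c| ∧
    |α * xc ^ 2 + 2 * γ * xc * yc + β * yc ^ 2 + 2 * a * xc + 2 * b * yc + c|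
        ≤ 2 * K * η / N := by
  have hK0 : (0:ℝ) < K := lt_of_lt_of_le one_pos hK
  have hN0 : (0:ℝ) < N := lt_trans one_pos hN
  -- clear denominators in the hypotheses
  have hα' : |α| * N ≤ K * η := by rwa [← le_div_iff₀ hN0]
  have hβ' : |β| * N ≤ K * η := by rwa [← le_div_iff₀ hN0]
  have ha' : |a| * N ≤ K * η := by rwa [← le_div_iff₀ hN0]
  have hb' : |b| * N ≤ K * η := by rwa [← le_div_iff₀ hN0]
  have hc1' : η ≤ |c| * (K * N) := by
    rw [div_le_iff₀ (by positivity)] at hc1; linarith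
  have hc2' : |c| * N ≤ K * η := by rwa [← le_div_iff₀ hN0]
  have hγ1' : 1 ≤ |γ| * (K * N) := by
    rw [div_le_iff₀ (by positivity)] at hγ1; linarith
  have hη' : η * (16 * K ^ 6) ≤ 1 := by
    rw [le_div_iff₀ (by positivity)] at hη; linarith
  -- power comparisons
  have hK26 : K ^ 2 ≤ K ^ 6 := pow_le_pow_right₀ hK (by norm_num)
  have hK35 : K ^ 3 ≤ K ^ 5 := pow_le_pow_right₀ hK (by norm_num)
  have hK57 : K ^ 5 ≤ K ^ 7 := pow_le_pow_right₀ hK (by norm_num)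
  have hK2 : K ^ 2 * η ≤ 1 / 16 := by nlinarith
  -- equations give bounds on |xc|, |yc|
  have e1 : γ * yc = -(α * xc) - a := by linarith
  have e2 : γ * xc = -(β * yc) - b := by linarith
  have h1 : |γ| * |yc| ≤ |α| * |xc| + |a| := by
    rw [← abs_mul, e1]
    calc |(-(α * xc) - a)| ≤ |(-(α * xc))| + |a| := abs_sub _ _
      _ = |α| * |xc| + |a| := by rw [abs_neg, abs_mul]
  have h2 : |γ| * |xc| ≤ |β| * |yc| + |b| := by
    rw [← abs_mul, e2]
    calc |(-(β * yc) - b)| ≤ |(-(β * yc))| + |b| := abs_sub _ _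
      _ = |β| * |yc| + |b| := by rw [abs_neg, abs_mul]
  have hxnn : 0 ≤ |xc| := abs_nonneg _
  have hynn : 0 ≤ |yc| := abs_nonneg _
  -- bound S = |xc| + |yc|
  have hA : |γ| * (|xc| + |yc|) * N ≤ K * η * (|xc| + |yc|) + 2 * (K * η) := by
    have t1 := mul_le_mul_of_nonneg_right h1 hN0.le
    have t2 := mul_le_mul_of_nonneg_right h2 hN0.le
    have t3 := mul_le_mul_of_nonneg_right hα' hxnn
    have t4 := mul_le_mul_of_nonneg_right hβ' hynn
    linarith [t1, t2, t3, t4]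
  have hB : |xc| + |yc| ≤ K * (|γ| * (|xc| + |yc|) * N) := by
    nlinarith [mul_le_mul_of_nonneg_right hγ1' (add_nonneg hxnn hynn)]
  have hS : |xc| + |yc| ≤ 4 * K ^ 2 * η := by
    linarith [mul_le_mul_of_nonneg_left hA hK0.le,
      mul_le_mul_of_nonneg_right hK2 (add_nonneg hxnn hynn),
      hB,
      mul_nonneg (pow_pos hK0 2).le hη0.le]
  set P := α * xc ^ 2 + 2 * γ * xc * yc + β * yc ^ 2 + 2 * a * xc + 2 * b * yc + c with hP
  have hPc : P - c = a * xc + b * yc := by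
    rw [hP]; linear_combination xc * hxc + yc * hyc
  have key : |P - c| ≤ 8 * K ^ 5 * η ^ 2 / N := by
    rw [hPc, le_div_iff₀ hN0]
    have h3 : |a * xc + b * yc| ≤ |a| * |xc| + |b| * |yc| := by
      calc |a * xc + b * yc| ≤ |a * xc| + |b * yc| := abs_add_le _ _
        _ = |a| * |xc| + |b| * |yc| := by rw [abs_mul, abs_mul]
    linarith [mul_le_mul_of_nonneg_right h3 hN0.le,
      mul_le_mul_of_nonneg_right ha' hxnn, mul_le_mul_of_nonneg_right hb' hynn,
      mul_le_mul_of_nonneg_left hS (mul_pos hK0 hη0).le,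
      mul_le_mul_of_nonneg_right hK35 (sq_nonneg η),
      mul_nonneg (pow_pos hK0 5).le (sq_nonneg η)]
  refine ⟨key, ?_, ?_⟩
  · rw [le_div_iff₀ hN0] at key
    have h4 : |c| - |P| ≤ |P - c| := by
      have := abs_sub_abs_le_abs_sub c P
      rwa [abs_sub_comm] at this
    rw [div_le_iff₀ (by positivity)]
    linarith [mul_le_mul_of_nonneg_right h4 (by positivity : (0:ℝ) ≤ 2 * K * N),
      mul_le_mul_of_nonneg_left key (by positivity : (0:ℝ) ≤ 2 * K),
      mul_le_mul_of_nonneg_right hη' hη0.le, hc1']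
  · rw [le_div_iff₀ hN0] at key
    have h5 : |P| - |c| ≤ |P - c| := abs_sub_abs_le_abs_sub P c
    rw [le_div_iff₀ hN0]
    linarith [mul_le_mul_of_nonneg_right h5 hN0.le,
      mul_le_mul_of_nonneg_right hη' (mul_pos hK0 hη0).le,
      mul_le_mul_of_nonneg_right hK57 (sq_nonneg η),
      (mul_pos hK0 hη0).le, hc2']
end

section
/- Let K ≥ 1, N > 1, and 0 < η ≤ 1/(2K²). Suppose α, β, γ ∈ ℝ satisfy |α| ≤ Kη/N, |β| ≤ Kη/N, and 1/(KN) ≤ |γ| ≤ K/N. Then both eigenvalues λ of the symmetric matrix [[α, γ], [γ, β]] satisfy 1/(2KN) ≤ |λ| ≤ 3K/N. Consequently, if in addition P₀ ∈ ℝ satisfies η/(2KN) ≤ |P₀| ≤ 2Kη/N, then |P₀/λ| ∈ [η/(6K²), 4K²η] for each eigenvalue λ. -/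
open Real

set_option maxHeartbeats 1000000 in
/-- Computation behind Proposition 2.4(ii): both eigenvalues `λ` of the
symmetric matrix `[[α, γ], [γ, β]]` (i.e. the roots of the characteristic
polynomial `λ² − (α+β)λ + (αβ − γ²)`) satisfy `1/(2KN) ≤ |λ| ≤ 3K/N`;
consequently, for `P₀` with `η/(2KN) ≤ |P₀| ≤ 2Kη/N` one has
`|P₀/λ| ∈ [η/(6K²), 4K²η]`. -/
theorem stmt12 (K N η α β γ : ℝ) (hK : 1 ≤ K) (hN : 1 < N) (hη0 : 0 < η)
    (hη : η ≤ 1 / (2 * K ^ 2))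
    (hα : |α| ≤ K * η / N) (hβ : |β| ≤ K * η / N)
    (hγ1 : 1 / (K * N) ≤ |γ|) (hγ2 : |γ| ≤ K / N) :
    (∀ lam : ℝ, lam ^ 2 - (α + β) * lam + (α * β - γ ^ 2) = 0 →
      1 / (2 * K * N) ≤ |lam| ∧ |lam| ≤ 3 * K / N) ∧
    ∀ P₀ : ℝ, η / (2 * K * N) ≤ |P₀| → |P₀| ≤ 2 * K * η / N →
      ∀ lam : ℝ, lam ^ 2 - (α + β) * lam + (α * β - γ ^ 2) = 0 →
        η / (6 * K ^ 2) ≤ |P₀ / lam| ∧ |P₀ / lam| ≤ 4 * K ^ 2 * η := by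
  have hN0 : (0:ℝ) < N := by linarith
  have hK0 : (0:ℝ) < K := by linarith
  have hKN : (0:ℝ) < K * N := by positivity
  -- basic bounds
  have hηKN : K * η / N ≤ 1 / (2 * K * N) := by
    rw [div_le_div_iff₀ hN0 (by positivity)]
    have h1 : K * η ≤ K * (1 / (2 * K ^ 2)) := by
      exact mul_le_mul_of_nonneg_left hη (le_of_lt hK0)
    have h2 : K * (1 / (2 * K ^ 2)) * (2 * K * N) = N := by
      field_simp
    nlinarith
  have hαb : |α| ≤ 1 / (2 * K * N) := le_trans hα hηKN
  have hβb : |β| ≤ 1 / (2 * K * N) := le_trans hβ hηKN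
  have hγsq : (1 / (K * N)) ^ 2 ≤ γ ^ 2 := by
    have := pow_le_pow_left₀ (by positivity) hγ1 2
    rwa [sq_abs] at this
  have hγsq2 : γ ^ 2 ≤ (K / N) ^ 2 := by
    have := pow_le_pow_left₀ (abs_nonneg γ) hγ2 2
    rwa [sq_abs] at this
  have main : ∀ lam : ℝ, lam ^ 2 - (α + β) * lam + (α * β - γ ^ 2) = 0 →
      1 / (2 * K * N) ≤ |lam| ∧ |lam| ≤ 3 * K / N := by
    intro lam heq
    have hprod : lam * (lam - (α + β)) = γ ^ 2 - α * β := by ring_nf; linarith [heq]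
    have habs : |lam| * |lam - (α + β)| = |γ ^ 2 - α * β| := by
      rw [← abs_mul, hprod]
    have htri : |lam - (α + β)| ≤ |lam| + |α| + |β| := by
      calc |lam - (α + β)| ≤ |lam| + |α + β| := abs_sub _ _
        _ ≤ |lam| + (|α| + |β|) := by gcongr; exact abs_add_le _ _
        _ = |lam| + |α| + |β| := by ring
    have hab : α * β ≤ |α| * |β| := by
      calc α * β ≤ |α * β| := le_abs_self _
        _ = |α| * |β| := abs_mul _ _
    have hlow : γ ^ 2 - α * β ≤ |lam| * |lam - (α + β)| := by
      rw [habs]; exact le_abs_self _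
    have hL0 : (0:ℝ) ≤ |lam| := abs_nonneg _
    have hLs0 : (0:ℝ) ≤ |lam - (α + β)| := abs_nonneg _
    constructor
    · by_contra h
      push_neg at h
      have h1 : |lam| * |lam - (α + β)| ≤ |lam| * (|lam| + |α| + |β|) :=
        mul_le_mul_of_nonneg_left htri hL0
      have hinv : (0:ℝ) < 1 / (2 * K * N) := by positivity
      have h2 : |lam| * (|lam| + |α| + |β|) < (1 / (2 * K * N)) * (3 * (1 / (2 * K * N))) := by
        have hs : |lam| + |α| + |β| ≤ 3 * (1 / (2 * K * N)) := by linarith [le_of_lt h]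
        calc |lam| * (|lam| + |α| + |β|) ≤ |lam| * (3 * (1 / (2 * K * N))) := by
              exact mul_le_mul_of_nonneg_left hs hL0
          _ < (1 / (2 * K * N)) * (3 * (1 / (2 * K * N))) := by
              apply mul_lt_mul_of_pos_right h (by positivity)
      have h3 : (1 / (2 * K * N)) * (3 * (1 / (2 * K * N))) = 3 / 4 * (1 / (K * N)) ^ 2 := by
        field_simp; ring
      have h4 : |α| * |β| ≤ (1 / (2 * K * N)) ^ 2 := by
        have := mul_le_mul hαb hβb (abs_nonneg β) (le_of_lt hinv)
        simpa [pow_two] using this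
      have h5 : (1 / (2 * K * N)) ^ 2 = 1 / 4 * (1 / (K * N)) ^ 2 := by
        field_simp; ring
      nlinarith
    · by_contra h
      push_neg at h
      set c := K / N with hc
      have hc0 : (0:ℝ) < c := by positivity
      have ha3 : 3 * c < |lam| := by rw [hc]; linarith [mul_div_assoc 3 K N]
      have ha0 : (0:ℝ) < |lam| := by linarith
      have hinvKN : 1 / (K * N) ≤ c := by
        rw [hc, div_le_div_iff₀ hKN hN0]; nlinarith
      have hαc : |α| ≤ c / 2 := le_trans hαb (by
        have : 1 / (2 * K * N) = (1 / (K * N)) / 2 := by ring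
        rw [this]; linarith)
      have hβc : |β| ≤ c / 2 := le_trans hβb (by
        have : 1 / (2 * K * N) = (1 / (K * N)) / 2 := by ring
        rw [this]; linarith)
      have hγc : γ ^ 2 ≤ c ^ 2 := hγsq2
      have heq2 : lam ^ 2 = (α + β) * lam + (γ ^ 2 - α * β) := by linarith
      have hsq : |lam| ^ 2 ≤ (|α| + |β|) * |lam| + γ ^ 2 + |α| * |β| := by
        have h1 : |lam| ^ 2 = |lam ^ 2| := by rw [abs_pow]
        rw [h1, heq2]
        calc |(α + β) * lam + (γ ^ 2 - α * β)|
            ≤ |(α + β) * lam| + |γ ^ 2 - α * β| := abs_add_le _ _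
          _ ≤ (|α| + |β|) * |lam| + (γ ^ 2 + |α| * |β|) := by
              gcongr
              · rw [abs_mul]
                exact mul_le_mul_of_nonneg_right (abs_add_le _ _) (abs_nonneg _)
              · calc |γ ^ 2 - α * β| ≤ |γ ^ 2| + |α * β| := abs_sub _ _
                  _ = γ ^ 2 + |α| * |β| := by rw [abs_mul, abs_pow, sq_abs]
          _ = (|α| + |β|) * |lam| + γ ^ 2 + |α| * |β| := by ring
      have hfin : |lam| ^ 2 ≤ c * |lam| + c ^ 2 + c ^ 2 / 4 := by
        have h1 : (|α| + |β|) * |lam| ≤ c * |lam| := by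
          apply mul_le_mul_of_nonneg_right _ hL0; linarith
        have h2 : |α| * |β| ≤ (c / 2) * (c / 2) :=
          mul_le_mul hαc hβc (abs_nonneg β) (by positivity)
        have h3 : (c / 2) * (c / 2) = c ^ 2 / 4 := by ring
        linarith
      have hca : c * |lam| < |lam| / 3 * |lam| := by
        apply mul_lt_mul_of_pos_right _ ha0; linarith
      have hcc : c ^ 2 < (|lam| / 3) ^ 2 :=
        pow_lt_pow_left₀ (by linarith) (le_of_lt hc0) (by norm_num)
      have e1 : |lam| / 3 * |lam| = |lam| ^ 2 / 3 := by ring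
      have e2 : (|lam| / 3) ^ 2 = |lam| ^ 2 / 9 := by ring
      have hpos : (0:ℝ) < |lam| ^ 2 := by positivity
      linarith
  refine ⟨main, ?_⟩
  intro P₀ hP1 hP2 lam heq
  obtain ⟨hl1, hl2⟩ := main lam heq
  have hlpos : (0:ℝ) < |lam| := lt_of_lt_of_le (by positivity) hl1
  rw [abs_div]
  constructor
  · rw [le_div_iff₀ hlpos]
    calc η / (6 * K ^ 2) * |lam| ≤ η / (6 * K ^ 2) * (3 * K / N) := by
          apply mul_le_mul_of_nonneg_left hl2 (by positivity)
      _ = η / (2 * K * N) := by field_simp; ring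
      _ ≤ |P₀| := hP1
  · rw [div_le_iff₀ hlpos]
    calc |P₀| ≤ 2 * K * η / N := hP2
      _ = 4 * K ^ 2 * η * (1 / (2 * K * N)) := by field_simp; ring
      _ ≤ 4 * K ^ 2 * η * |lam| := by
          apply mul_le_mul_of_nonneg_left hl1 (by positivity)
end

section
/- Let K ≥ 1 and N ≥ 1. Suppose A, B > 0 satisfy N/K ≤ A² ≤ KN and N/K ≤ B² ≤ KN, P₀ ∈ [η/(KN), Kη/N], and R : ℝ² → ℝ satisfies |R(p,q)| ≤ Kη^(8/5)/N whenever p² + q² ≤ 4η^(4/5). Then there exist η₀ > 0 and C depending only on K such that for all 0 < η < η₀ the following holds: if x̃ > 0 and y ∈ ℝ satisfy x̃² + y² ≤ 4η^(4/5) and x̃²/A² − y²/B² = P₀ + R(x̃, y), and x(y) = (A/B)·√(B²P₀ + y²), then |x̃ − x(y)| ≤ C·η^(11/10). -/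
open Real

set_option maxHeartbeats 1000000

/-- Refined perturbation bound of Section 2: a point `(x̃, y)` of the true
nodal set with `x̃ > 0` lies within `Cη^{11/10}` of the model hyperbola branch
`x(y) = (A/B)√(B²P₀ + y²)`. -/
theorem stmt14 (K : ℝ) (hK : 1 ≤ K) :
    ∃ η₀ C : ℝ, 0 < η₀ ∧ 0 < C ∧
      ∀ (N η A B P₀ : ℝ) (R : ℝ × ℝ → ℝ),
        1 ≤ N → 0 < η → η < η₀ →
        0 < A → 0 < B →
        N / K ≤ A ^ 2 → A ^ 2 ≤ K * N →
        N / K ≤ B ^ 2 → B ^ 2 ≤ K * N →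
        η / (K * N) ≤ P₀ → P₀ ≤ K * η / N →
        (∀ p q : ℝ, p ^ 2 + q ^ 2 ≤ 4 * η ^ ((4:ℝ)/5) →
          |R (p, q)| ≤ K * η ^ ((8:ℝ)/5) / N) →
        ∀ xt y : ℝ, 0 < xt →
          xt ^ 2 + y ^ 2 ≤ 4 * η ^ ((4:ℝ)/5) →
          xt ^ 2 / A ^ 2 - y ^ 2 / B ^ 2 = P₀ + R (xt, y) →
          |xt - A / B * Real.sqrt (B ^ 2 * P₀ + y ^ 2)| ≤ C * η ^ ((11:ℝ)/10) := by
  have hK0 : 0 < K := lt_of_lt_of_le one_pos hK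
  refine ⟨1, K ^ 3, one_pos, by positivity, ?_⟩
  intro N η A B P₀ R hN hη hη1 hA hB hAl hAu hBl hBu hPl hPu hR xt y hxt hball heq
  have hN0 : 0 < N := lt_of_lt_of_le one_pos hN
  have hP0 : 0 < P₀ := lt_of_lt_of_le (by positivity) hPl
  set s := Real.sqrt (B ^ 2 * P₀ + y ^ 2) with hs
  have hs2 : s ^ 2 = B ^ 2 * P₀ + y ^ 2 := Real.sq_sqrt (by positivity)
  set x := A / B * s with hxdef
  -- key identity
  have hB2 : (B:ℝ) ^ 2 ≠ 0 := by positivity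
  have hA2 : (A:ℝ) ^ 2 ≠ 0 := by positivity
  have key : xt ^ 2 - x ^ 2 = A ^ 2 * R (xt, y) := by
    have hx2 : x ^ 2 = A ^ 2 * P₀ + A ^ 2 * y ^ 2 / B ^ 2 := by
      rw [hxdef, mul_pow, div_pow, hs2]
      field_simp
    have h2 : xt ^ 2 = A ^ 2 * P₀ + A ^ 2 * y ^ 2 / B ^ 2 + A ^ 2 * R (xt, y) := by
      have := heq
      field_simp at this ⊢
      nlinarith [this]
    rw [h2, hx2]; ring
  -- lower bound on x
  have hsqη : Real.sqrt η / K ≤ x := by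
    have h1 : Real.sqrt (N / K) ≤ A := by
      have := Real.sqrt_le_sqrt hAl
      rwa [Real.sqrt_sq hA.le] at this
    have h2 : Real.sqrt (η / (K * N)) ≤ Real.sqrt P₀ := Real.sqrt_le_sqrt hPl
    have h3 : B * Real.sqrt P₀ ≤ s := by
      have : Real.sqrt (B ^ 2 * P₀) ≤ s := Real.sqrt_le_sqrt (by nlinarith [sq_nonneg y])
      rwa [show B ^ 2 * P₀ = (B * Real.sqrt P₀) ^ 2 by
        rw [mul_pow, Real.sq_sqrt hP0.le], Real.sqrt_sq (by positivity)] at this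
    have h4 : A * Real.sqrt P₀ ≤ x := by
      rw [hxdef]
      calc A * Real.sqrt P₀ = A / B * (B * Real.sqrt P₀) := by field_simp
        _ ≤ A / B * s := by
            apply mul_le_mul_of_nonneg_left h3 (by positivity)
    have h5 : Real.sqrt η / K = Real.sqrt (N / K) * Real.sqrt (η / (K * N)) := by
      rw [← Real.sqrt_mul (by positivity)]
      rw [show N / K * (η / (K * N)) = η / K ^ 2 by field_simp]
      rw [Real.sqrt_div hη.le, Real.sqrt_sq hK0.le]
    calc Real.sqrt η / K = Real.sqrt (N / K) * Real.sqrt (η / (K * N)) := h5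
      _ ≤ A * Real.sqrt P₀ := by
          apply mul_le_mul h1 h2 (by positivity) hA.le
      _ ≤ x := h4
  have hx0 : 0 < x := lt_of_lt_of_le (by positivity) hsqη
  -- bound on the difference
  have hRb : |R (xt, y)| ≤ K * η ^ ((8:ℝ)/5) / N := hR xt y hball
  have hmain : |xt - x| * (Real.sqrt η / K) ≤ K ^ 2 * η ^ ((8:ℝ)/5) := by
    calc |xt - x| * (Real.sqrt η / K) ≤ |xt - x| * (xt + x) := by
          apply mul_le_mul_of_nonneg_left _ (abs_nonneg _)
          linarith
      _ = |xt ^ 2 - x ^ 2| := by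
          have hsum : 0 < xt + x := by linarith
          rw [show xt ^ 2 - x ^ 2 = (xt - x) * (xt + x) by ring, abs_mul,
            abs_of_pos hsum]
      _ = A ^ 2 * |R (xt, y)| := by
          rw [key, abs_mul, abs_of_pos (by positivity)]
      _ ≤ (K * N) * (K * η ^ ((8:ℝ)/5) / N) := by
          apply mul_le_mul hAu hRb (abs_nonneg _) (by positivity)
      _ = K ^ 2 * η ^ ((8:ℝ)/5) * (N / N) := by ring
      _ = K ^ 2 * η ^ ((8:ℝ)/5) := by rw [div_self hN0.ne', mul_one]
  -- convert
  have hsη : Real.sqrt η = η ^ ((1:ℝ)/2) := Real.sqrt_eq_rpow η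
  have hsplit : η ^ ((8:ℝ)/5) = η ^ ((11:ℝ)/10) * η ^ ((1:ℝ)/2) := by
    rw [← Real.rpow_add hη]; norm_num
  have hpos : 0 < Real.sqrt η / K := by positivity
  have : |xt - x| * (Real.sqrt η / K) ≤ (K ^ 3 * η ^ ((11:ℝ)/10)) * (Real.sqrt η / K) := by
    calc |xt - x| * (Real.sqrt η / K) ≤ K ^ 2 * η ^ ((8:ℝ)/5) := hmain
      _ = (K ^ 3 * η ^ ((11:ℝ)/10)) * (Real.sqrt η / K) := by
          rw [hsplit, hsη, mul_div_assoc', eq_comm, div_eq_iff hK0.ne']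
          ring
  exact le_of_mul_le_mul_right this hpos
end

section
/- Let K ≥ 1 and N > 4. Suppose v : [0,N]×[0,1] → ℝ can be written as v(x,y) = v₁(x)sin(πy) + v₂(x)sin(2πy) + E(x,y) where |v₁(x)| ≤ Kη/N, |E(x,y)| ≤ Kη/N, and |v₂(x) − sin(2πx/N)| ≤ Kη/N for all (x,y). Then there exist η₀ > 0 and A₀ depending only on K such that for all 0 < η < η₀ and all (x,y) with |x − N/2| ≤ 1/10, |y − 1/2| ≤ 1/4, and |x − N/2|·|y − 1/2| ≥ A₀η, one has v(x,y) ≠ 0. -/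
open Real

/-! Since `v₁` and `E` are `O(η/N)`, a zero of `v` forces `|v₂(x) sin(2πy)| ≲ 2Kη/N`, while
`v₂(x) ≈ sin(2πx/N)`. Both sines vanish linearly at the centre: by Jordan's inequality
`|sin(2πx/N)| ≥ 4|x − N/2|/N` and `|sin(2πy)| ≥ 4|y − 1/2|`, so a zero satisfies
`16|x − N/2||y − 1/2| ≤ 3Kη`, and `A₀ = K` works for every `η > 0`. -/

lemma four_mul_abs_sub_half_div_le_abs_sin {N x : ℝ} (hN : 0 < N) (hx : |x - N / 2| ≤ N / 4) :
    4 * |x - N / 2| / N ≤ |sin (2 * π * x / N)| := by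
  have hshift : 2 * π * x / N = 2 * π * (x - N / 2) / N + π := by
    field_simp
    ring
  have hjordan : |2 * π * (x - N / 2) / N| ≤ π / 2 := by
    rw [abs_div, abs_mul, abs_of_pos two_pi_pos, abs_of_pos hN, div_le_iff₀ hN]
    nlinarith [pi_pos]
  calc 4 * |x - N / 2| / N = 2 / π * |2 * π * (x - N / 2) / N| := by
        rw [abs_div, abs_mul, abs_of_pos two_pi_pos, abs_of_pos hN]
        field_simp
        ring
    _ ≤ |sin (2 * π * (x - N / 2) / N)| := mul_abs_le_abs_sin hjordan
    _ = |sin (2 * π * x / N)| := by rw [hshift, sin_add_pi, abs_neg]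

lemma add_mul_add_ne_zero_of_abs_sub_le {a b c e s δ : ℝ} (hb : |b| ≤ 1) (ha : |a - s| ≤ δ)
    (hc : |c| ≤ δ) (he : |e| ≤ δ) (hlt : 3 * δ < |s| * |b|) : c + a * b + e ≠ 0 := by
  intro hzero
  have hab : |a * b| ≤ 2 * δ := by
    rw [show a * b = -(c + e) by linarith, abs_neg]
    linarith [abs_add_le c e]
  have hsb : |s| * |b| ≤ |a| * |b| + δ := by
    have hsa : |s| ≤ |a| + δ := by linarith [abs_sub_abs_le_abs_sub s a, abs_sub_comm a s]
    nlinarith [abs_nonneg b, abs_nonneg (a - s)]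
  rw [abs_mul] at hab
  linarith

/-- Theorem 1.7(iii): with `v = v₁(x)sin(πy) + v₂(x)sin(2πy) + E(x,y)`,
`|v₁| ≤ Kη/N`, `|E| ≤ Kη/N`, `|v₂(x) − sin(2πx/N)| ≤ Kη/N`, the eigenfunction
`v` does not vanish at points near the center with
`|x − N/2||y − 1/2| ≥ A₀η`. -/
theorem stmt15 (K : ℝ) (hK : 1 ≤ K) :
    ∃ η₀ A₀ : ℝ, 0 < η₀ ∧ 0 < A₀ ∧
      ∀ (N η : ℝ) (v : ℝ → ℝ → ℝ) (v₁ v₂ : ℝ → ℝ) (E : ℝ → ℝ → ℝ),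
        4 < N → 0 < η → η < η₀ →
        (∀ x ∈ Set.Icc (0:ℝ) N, ∀ y ∈ Set.Icc (0:ℝ) 1,
          v x y = v₁ x * Real.sin (π * y) + v₂ x * Real.sin (2 * π * y) + E x y) →
        (∀ x ∈ Set.Icc (0:ℝ) N, |v₁ x| ≤ K * η / N) →
        (∀ x ∈ Set.Icc (0:ℝ) N, ∀ y ∈ Set.Icc (0:ℝ) 1, |E x y| ≤ K * η / N) →
        (∀ x ∈ Set.Icc (0:ℝ) N, |v₂ x - Real.sin (2 * π * x / N)| ≤ K * η / N) →
        ∀ x ∈ Set.Icc (0:ℝ) N, ∀ y ∈ Set.Icc (0:ℝ) 1,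
          |x - N / 2| ≤ 1 / 10 → |y - 1 / 2| ≤ 1 / 4 →
          A₀ * η ≤ |x - N / 2| * |y - 1 / 2| →
          v x y ≠ 0 := by
  refine ⟨1, K, one_pos, by linarith, ?_⟩
  intro N η v v₁ v₂ E hN hη _ hdec hv₁ hE hv₂ x hx y hy hxc hyc hfar
  have hN0 : 0 < N := by linarith
  have hsinx := four_mul_abs_sub_half_div_le_abs_sin hN0 (x := x) (by linarith)
  have hsiny : 4 * |y - 1 / 2| ≤ |sin (2 * π * y)| := by
    simpa using four_mul_abs_sub_half_div_le_abs_sin one_pos (x := y) (by linarith)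
  have hv₁sin : |v₁ x * sin (π * y)| ≤ K * η / N := by
    rw [abs_mul]
    exact (mul_le_of_le_one_right (abs_nonneg _) (abs_sin_le_one _)).trans (hv₁ x hx)
  rw [hdec x hx y hy]
  refine add_mul_add_ne_zero_of_abs_sub_le (abs_sin_le_one _) (hv₂ x hx) hv₁sin (hE x hx y hy) ?_
  have hKη : 0 < K * η := by positivity
  calc 3 * (K * η / N) < 16 * (K * η) / N := by
        rw [← mul_div_assoc]; gcongr; linarith
    _ ≤ 16 * (|x - N / 2| * |y - 1 / 2|) / N := by gcongr
    _ = 4 * |x - N / 2| / N * (4 * |y - 1 / 2|) := by ring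
    _ ≤ |sin (2 * π * x / N)| * |sin (2 * π * y)| :=
        mul_le_mul hsinx hsiny (by positivity) (abs_nonneg _)
end

section
/- Let K ≥ 1 and N > 4. Suppose v : [0,N]×[0,1] → ℝ satisfies |v(x,y) − sin(2πx/N)sin(2πy)| ≤ Kη/N for all (x,y). Then there exist η₀ > 0 and A₀ depending only on K such that for all 0 < η < η₀ and all (x,y) with x ∈ [1, N−1], |x − N/2| ≥ 1/10, and y ∈ [1/4, 3/4]: if |y − 1/2| ≥ A₀η/(N|sin(2πx/N)| + 1), then v(x,y) ≠ 0. -/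
open Real

/-- `sin θ ≥ (2/π) c` whenever `c ≤ θ` and `c ≤ π − θ` with `0 ≤ c`. -/
lemma aux_sin_lb {θ c : ℝ} (h0 : 0 ≤ c) (h1 : c ≤ θ) (h2 : c ≤ π - θ) :
    2 / π * c ≤ Real.sin θ := by
  have hπ : (0:ℝ) < π := Real.pi_pos
  have h2π : (0:ℝ) ≤ 2 / π := by positivity
  rcases le_total θ (π / 2) with h | h
  · calc 2 / π * c ≤ 2 / π * θ := by gcongr
      _ ≤ Real.sin θ := Real.mul_le_sin (by linarith) h
  · have : Real.sin θ = Real.sin (π - θ) := (Real.sin_pi_sub θ).symm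
    rw [this]
    calc 2 / π * c ≤ 2 / π * (π - θ) := by gcongr
      _ ≤ Real.sin (π - θ) := Real.mul_le_sin (by linarith) (by linarith)

set_option maxHeartbeats 1000000 in
/-- Theorem 1.7(iv): if `|v(x,y) − sin(2πx/N)sin(2πy)| ≤ Kη/N`, then for
`x ∈ [1, N−1]` with `|x − N/2| ≥ 1/10` and `y ∈ [1/4, 3/4]` with
`|y − 1/2| ≥ A₀η/(N|sin(2πx/N)| + 1)`, the function `v` does not vanish. -/
theorem stmt16 (K : ℝ) (hK : 1 ≤ K) :
    ∃ η₀ A₀ : ℝ, 0 < η₀ ∧ 0 < A₀ ∧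
      ∀ (N η : ℝ) (v : ℝ → ℝ → ℝ),
        4 < N → 0 < η → η < η₀ →
        (∀ x ∈ Set.Icc (0:ℝ) N, ∀ y ∈ Set.Icc (0:ℝ) 1,
          |v x y - Real.sin (2 * π * x / N) * Real.sin (2 * π * y)| ≤ K * η / N) →
        ∀ x ∈ Set.Icc (1:ℝ) (N - 1), ∀ y ∈ Set.Icc (1/4 : ℝ) (3/4),
          1 / 10 ≤ |x - N / 2| →
          A₀ * η / (N * |Real.sin (2 * π * x / N)| + 1) ≤ |y - 1 / 2| →
          v x y ≠ 0 := by
  refine ⟨1, K, one_pos, by linarith, ?_⟩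
  intro N η v hN hη hη1 hv x hx y hy hx2 hy2 h0
  have hπ : (0:ℝ) < π := Real.pi_pos
  have hN0 : (0:ℝ) < N := by linarith
  obtain ⟨hx1, hxN⟩ := hx
  obtain ⟨hy1, hy3⟩ := hy
  set t := 2 * π * x / N with ht
  set s := |Real.sin t| with hsdef
  have hfs : π / (5 * N) * N = π / 5 := by field_simp
  have hc0 : (0:ℝ) ≤ π / (5 * N) := by positivity
  have heq : 2 / π * (π / (5 * N)) = 2 / (5 * N) := by
    field_simp
  -- lower bound on s
  have hs : 2 / (5 * N) ≤ s := by
    rcases le_total x (N / 2) with hc | hc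
    · -- x ≤ N/2 - 1/10, so t ∈ [π/(5N), π - π/(5N)]
      have hx' : x ≤ N / 2 - 1 / 10 := by
        rcases abs_cases (x - N / 2) with ⟨he, _⟩ | ⟨he, _⟩ <;> linarith [hx2, he]
      have ht1 : π / (5 * N) ≤ t := by
        rw [ht, div_le_div_iff₀ (by positivity) hN0]
        nlinarith [mul_nonneg (mul_nonneg hπ.le hN0.le)
          (show (0:ℝ) ≤ 10 * x - 1 by linarith)]
      have ht2 : π / (5 * N) ≤ π - t := by
        have h' : 2 * π * x / N ≤ π - π / (5 * N) := by
          rw [div_le_iff₀ hN0, sub_mul]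
          nlinarith [hfs, mul_nonneg (show (0:ℝ) ≤ 2 * π by positivity)
            (show (0:ℝ) ≤ N / 2 - 1 / 10 - x by linarith)]
        rw [ht]; linarith
      have hlb := aux_sin_lb hc0 ht1 ht2
      calc 2 / (5 * N) = 2 / π * (π / (5 * N)) := heq.symm
        _ ≤ Real.sin t := hlb
        _ ≤ s := le_abs_self _
    · -- x ≥ N/2 + 1/10, so t - π ∈ [π/(5N), π - π/(5N)]
      have hx' : N / 2 + 1 / 10 ≤ x := by
        rcases abs_cases (x - N / 2) with ⟨he, _⟩ | ⟨he, _⟩ <;> linarith [hx2, he]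
      have ht1 : π / (5 * N) ≤ t - π := by
        have h' : π + π / (5 * N) ≤ 2 * π * x / N := by
          rw [le_div_iff₀ hN0, add_mul]
          nlinarith [hfs, mul_nonneg (show (0:ℝ) ≤ 2 * π by positivity)
            (show (0:ℝ) ≤ x - N / 2 - 1 / 10 by linarith)]
        rw [ht]; linarith
      have ht2 : π / (5 * N) ≤ π - (t - π) := by
        have h' : 2 * π * x / N ≤ 2 * π - π / (5 * N) := by
          rw [div_le_iff₀ hN0, sub_mul]
          nlinarith [hfs, mul_nonneg (show (0:ℝ) ≤ 2 * π by positivity)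
            (show (0:ℝ) ≤ N - 1 - x by linarith)]
        rw [ht] at *; linarith
      have hlb := aux_sin_lb hc0 ht1 ht2
      have hsin : Real.sin t = -Real.sin (t - π) := by
        have h := Real.sin_add_pi (t - π)
        simpa using h
      calc 2 / (5 * N) = 2 / π * (π / (5 * N)) := heq.symm
        _ ≤ Real.sin (t - π) := hlb
        _ ≤ |Real.sin (t - π)| := le_abs_self _
        _ = s := by rw [hsdef, hsin, abs_neg]
  -- lower bound on |sin (2πy)|
  set d := |y - 1 / 2| with hddef
  have hd4 : d ≤ 1 / 4 := by
    rcases abs_cases (y - 1 / 2) with ⟨he, _⟩ | ⟨he, _⟩ <;> rw [hddef] <;> linarith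
  have hd0 : 0 ≤ d := abs_nonneg _
  have h4d : 2 / π * (2 * π * d) = 4 * d := by
    field_simp; ring
  have hysin : 4 * d ≤ |Real.sin (2 * π * y)| := by
    rcases le_total y (1 / 2) with hc | hc
    · have hde : d = 1 / 2 - y := by rw [hddef, abs_of_nonpos (by linarith)]; ring
      have h1 : 2 * π * d ≤ 2 * π * y := by nlinarith
      have h2 : 2 * π * d ≤ π - 2 * π * y := by rw [hde]; ring_nf; nlinarith
      have hlb := aux_sin_lb (by positivity) h1 h2
      rw [h4d] at hlb
      exact hlb.trans (le_abs_self _)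
    · have hde : d = y - 1 / 2 := by rw [hddef, abs_of_nonneg (by linarith)]
      have hsin : Real.sin (2 * π * d) = -Real.sin (2 * π * y) := by
        rw [hde, show 2 * π * (y - 1 / 2) = 2 * π * y - π from by ring, Real.sin_sub_pi]
      have hlb : 2 / π * (2 * π * d) ≤ Real.sin (2 * π * d) :=
        Real.mul_le_sin (by positivity) (by nlinarith)
      rw [h4d] at hlb
      calc 4 * d ≤ Real.sin (2 * π * d) := hlb
        _ ≤ |Real.sin (2 * π * d)| := le_abs_self _
        _ = |Real.sin (2 * π * y)| := by rw [hsin, abs_neg]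
  -- combine
  have hvb := hv x ⟨by linarith, by linarith⟩ y ⟨by linarith, by linarith⟩
  rw [h0, zero_sub, abs_neg, abs_mul] at hvb
  -- hvb : s * |sin (2πy)| ≤ K η / N
  have hs0 : (0:ℝ) ≤ s := abs_nonneg _
  have hD : (0:ℝ) < N * s + 1 := by positivity
  have hNs : 2 / 5 ≤ N * s := by
    have h1 := mul_le_mul_of_nonneg_left hs hN0.le
    have heq2 : N * (2 / (5 * N)) = 2 / 5 := by field_simp
    rw [heq2] at h1
    exact h1
  have hKη : 0 < K * η := by nlinarith
  have hstep : K * η / N < s * (K * η / (N * s + 1)) * 4 := by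
    have hrw : s * (K * η / (N * s + 1)) * 4 = 4 * s * (K * η) / (N * s + 1) := by ring
    rw [hrw, div_lt_div_iff₀ hN0 hD]
    nlinarith [mul_pos hKη (show (0:ℝ) < 3 * (N * s) - 1 by linarith)]
  have hfinal : K * η / N < s * |Real.sin (2 * π * y)| := by
    calc K * η / N < s * (K * η / (N * s + 1)) * 4 := hstep
      _ ≤ s * d * 4 := by
          have := mul_le_mul_of_nonneg_left hy2 hs0
          nlinarith
      _ = s * (4 * d) := by ring
      _ ≤ s * |Real.sin (2 * π * y)| := mul_le_mul_of_nonneg_left hysin hs0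
  linarith
end

section
/- Let K ≥ 1 and N > 4. Suppose v : [0,N]×[0,1] → ℝ has the form v(x,y) = v₂(x)sin(2πy) + B(x,y) where v₂ is differentiable with |v₂(x) − sin(2πx/N)| ≤ Kη/N and |v₂'(x)| ≤ K/N for all x ∈ [0,N], and B is differentiable with |B(x,y)| + |∂ₓB(x,y)| + |∂ᵧB(x,y)| ≤ Kη/N for all (x,y). Then there exist η₀ > 0, c > 0, and C depending only on K such that for all 0 < η < η₀ the following holds at every zero (x₀,y₀) of v with x₀ ∈ [1, N−1], |x₀ − N/2| ≥ √η, and |y₀ − 1/2| ≤ 1/8: |∂ᵧv(x₀,y₀)| ≥ c·|sin(2πx₀/N)| > 0, and |∂ₓv(x₀,y₀)|/|∂ᵧv(x₀,y₀)| ≤ C·η/(N·|sin(2πx₀/N)|) + C·η/(N²·sin²(2πx₀/N)). -/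
/-!
Away from the central opening, `s = |sin(2πx₀/N)| ≥ 4√η/N` by Jordan's inequality, and for
`η < 1/K²` this dominates the error `Kη/N` fourfold; hence `|v₂(x₀)| ≥ 3s/4`. Near `y = 1/2`
we have `|cos(2πy₀)| ≥ 1/2`, so `∂ᵧv ≈ 2πv₂cos(2πy₀)` has size at least `s`. At a zero,
`v₂ sin(2πy₀) = -B` forces `|sin(2πy₀)| ≤ 4Kη/(3Ns)`, which makes `∂ₓv = v₂' sin(2πy₀) + ∂ₓB`
of size `O(K²η/(N²s) + Kη/N)`; dividing by `s` gives the slope bound.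
-/

open Real

theorem two_div_pi_mul_le_sin {a θ : ℝ} (ha0 : 0 ≤ a) (ha : a ≤ θ) (hθ : θ ≤ π - a) :
    2 / π * a ≤ sin θ := by
  rcases le_total θ (π / 2) with h | h
  · calc 2 / π * a ≤ 2 / π * θ := by gcongr
      _ ≤ sin θ := mul_le_sin (ha0.trans ha) h
  · rw [← sin_pi_sub]
    calc 2 / π * a ≤ 2 / π * (π - θ) := by gcongr; linarith
      _ ≤ sin (π - θ) := mul_le_sin (by linarith) (by linarith)

theorem two_div_pi_mul_le_abs_sin {a θ : ℝ} (ha0 : 0 ≤ a) (ha : a ≤ θ) (hθ : θ ≤ 2 * π - a)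
    (hπ : a ≤ |θ - π|) : 2 / π * a ≤ |sin θ| := by
  rcases le_total θ π with h | h
  · rw [abs_of_nonpos (by linarith)] at hπ
    exact (two_div_pi_mul_le_sin ha0 ha (by linarith)).trans (le_abs_self _)
  · rw [abs_of_nonneg (by linarith)] at hπ
    have h' := two_div_pi_mul_le_sin ha0 hπ (by linarith)
    rw [sin_sub_pi] at h'
    exact h'.trans (neg_le_abs _)

theorem four_mul_div_le_abs_sin_two_pi_mul_div {N x d : ℝ} (hN : 0 < N) (hd : 0 ≤ d)
    (hdx : d ≤ x) (hxN : x ≤ N - d) (hmid : d ≤ |x - N / 2|) :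
    4 * d / N ≤ |sin (2 * π * x / N)| := by
  have hπ : 0 < 2 * π / N := by positivity
  have key := two_div_pi_mul_le_abs_sin (a := 2 * π / N * d) (θ := 2 * π / N * x)
    (by positivity) (by gcongr) ?_ ?_
  · rwa [show 2 / π * (2 * π / N * d) = 4 * d / N by field_simp; ring,
      show 2 * π / N * x = 2 * π * x / N by ring] at key
  · calc 2 * π / N * x ≤ 2 * π / N * (N - d) := by gcongr
      _ = 2 * π - 2 * π / N * d := by field_simp
  · rw [show 2 * π / N * x - π = 2 * π / N * (x - N / 2) by field_simp, abs_mul,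
      abs_of_pos hπ]
    gcongr

theorem half_le_abs_cos_two_pi_mul {y : ℝ} (hy : |y - 1 / 2| ≤ 1 / 8) :
    1 / 2 ≤ |cos (2 * π * y)| := by
  have h : cos (2 * π * y) = -cos |2 * π * (y - 1 / 2)| := by
    rw [cos_abs, show 2 * π * (y - 1 / 2) = 2 * π * y - π by ring, cos_sub_pi, neg_neg]
  rw [h, abs_neg]
  calc 1 / 2 = cos (π / 3) := cos_pi_div_three.symm
    _ ≤ cos |2 * π * (y - 1 / 2)| :=
      cos_le_cos_of_nonneg_of_le_pi (abs_nonneg _) (by linarith [pi_pos]) ?_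
    _ ≤ _ := le_abs_self _
  rw [abs_mul, abs_of_pos two_pi_pos]
  nlinarith [pi_pos]

theorem mul_le_sqrt_of_sq_mul_le_one {K η : ℝ} (hK : 0 ≤ K) (hη : 0 ≤ η) (h : K ^ 2 * η ≤ 1) :
    K * η ≤ √η := by
  rw [le_sqrt (by positivity) hη]
  nlinarith

theorem le_abs_two_pi_mul_mul_add {a κ β s : ℝ} (hs : 0 ≤ s) (ha : 3 / 4 * s ≤ |a|)
    (hκ : 1 / 2 ≤ |κ|) (hβ : |β| ≤ s / 4) : s ≤ |2 * π * a * κ + β| := by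
  have hmain : 2 * s ≤ |2 * π * a * κ| := by
    rw [abs_mul, abs_mul, abs_of_pos two_pi_pos]
    calc 2 * s ≤ 2 * π * (3 / 4 * s) * (1 / 2) := by nlinarith [pi_gt_three]
      _ ≤ 2 * π * |a| * |κ| := by gcongr
  have := abs_sub_abs_le_abs_sub (2 * π * a * κ) (-β)
  rw [abs_neg, sub_neg_eq_add] at this
  linarith

theorem abs_le_div_of_mul_add_eq_zero {a σ b ε m : ℝ} (hm : 0 < m) (hma : m ≤ |a|)
    (h : a * σ + b = 0) (hb : |b| ≤ ε) : |σ| ≤ ε / m := by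
  rw [le_div_iff₀ hm]
  calc |σ| * m ≤ |σ| * |a| := by gcongr
    _ = |b| := by rw [← abs_mul, mul_comm, eq_neg_of_add_eq_zero_left h, abs_neg]
    _ ≤ ε := hb

theorem partial_bounds_at_zero_of_perturbed_mode {S a a' σ κ b bx by' ε L : ℝ}
    (hS : 0 < |S|) (hεS : 4 * ε ≤ |S|) (ha : |a - S| ≤ ε) (ha' : |a'| ≤ L) (hκ : 1 / 2 ≤ |κ|)
    (hzero : a * σ + b = 0) (hb : |b| ≤ ε) (hbx : |bx| ≤ ε) (hby : |by'| ≤ ε) :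
    |S| ≤ |2 * π * a * κ + by'| ∧
      |a' * σ + bx| / |2 * π * a * κ + by'| ≤ (L * (ε / (3 / 4 * |S|)) + ε) / |S| := by
  have haS : 3 / 4 * |S| ≤ |a| := by
    linarith [abs_sub_abs_le_abs_sub S a, abs_sub_comm a S]
  have hden := le_abs_two_pi_mul_mul_add (β := by') hS.le haS hκ (by linarith)
  have hσ : |σ| ≤ ε / (3 / 4 * |S|) := abs_le_div_of_mul_add_eq_zero (by positivity) haS hzero hb
  have hnum : |a' * σ + bx| ≤ L * (ε / (3 / 4 * |S|)) + ε :=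
    calc _ ≤ |a'| * |σ| + |bx| := by rw [← abs_mul]; exact abs_add_le _ _
      _ ≤ _ := by gcongr; exact (abs_nonneg _).trans ha'
  have hε : 0 ≤ ε := (abs_nonneg b).trans hb
  have hL : 0 ≤ L := (abs_nonneg a').trans ha'
  exact ⟨hden, div_le_div₀ (by positivity) hnum hS hden⟩

/-- Quantitative content of Proposition 3.2: at every zero `(x₀,y₀)` of
`v = v₂(x)sin(2πy) + B(x,y)` away from the central opening, the
`y`-partial derivative `2π v₂(x₀)cos(2πy₀) + ∂ᵧB(x₀,y₀)` is bounded below by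
`c|sin(2πx₀/N)| > 0`, and the ratio of the `x`-partial derivative
`v₂'(x₀)sin(2πy₀) + ∂ₓB(x₀,y₀)` to it obeys the stated slope bound. -/
theorem stmt17 (K : ℝ) (hK : 1 ≤ K) :
    ∃ η₀ c C : ℝ, 0 < η₀ ∧ 0 < c ∧ 0 < C ∧
      ∀ (N η : ℝ) (v₂ v₂' : ℝ → ℝ) (B Bx By : ℝ → ℝ → ℝ),
        4 < N → 0 < η → η < η₀ →
        (∀ x ∈ Set.Icc (0:ℝ) N, HasDerivAt v₂ (v₂' x) x) →
        (∀ x ∈ Set.Icc (0:ℝ) N, |v₂ x - Real.sin (2 * π * x / N)| ≤ K * η / N) →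
        (∀ x ∈ Set.Icc (0:ℝ) N, |v₂' x| ≤ K / N) →
        (∀ x ∈ Set.Icc (0:ℝ) N, ∀ y ∈ Set.Icc (0:ℝ) 1,
          HasDerivAt (fun t => B t y) (Bx x y) x ∧
          HasDerivAt (fun t => B x t) (By x y) y) →
        (∀ x ∈ Set.Icc (0:ℝ) N, ∀ y ∈ Set.Icc (0:ℝ) 1,
          |B x y| + |Bx x y| + |By x y| ≤ K * η / N) →
        ∀ x₀ ∈ Set.Icc (1:ℝ) (N - 1), ∀ y₀ ∈ Set.Icc (0:ℝ) 1,
          Real.sqrt η ≤ |x₀ - N / 2| → |y₀ - 1 / 2| ≤ 1 / 8 →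
          v₂ x₀ * Real.sin (2 * π * y₀) + B x₀ y₀ = 0 →
          0 < c * |Real.sin (2 * π * x₀ / N)| ∧
          c * |Real.sin (2 * π * x₀ / N)|
            ≤ |2 * π * v₂ x₀ * Real.cos (2 * π * y₀) + By x₀ y₀| ∧
          |v₂' x₀ * Real.sin (2 * π * y₀) + Bx x₀ y₀|
              / |2 * π * v₂ x₀ * Real.cos (2 * π * y₀) + By x₀ y₀|
            ≤ C * η / (N * |Real.sin (2 * π * x₀ / N)|)
              + C * η / (N ^ 2 * Real.sin (2 * π * x₀ / N) ^ 2) := by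
  have hK0 : 0 < K := by linarith
  refine ⟨1 / K ^ 2, 1, 2 * K ^ 2, by positivity, one_pos, by positivity, ?_⟩
  intro N η v₂ v₂' B Bx By hN hη hηK _ hv₂ hv₂' _ hB x₀ hx₀ y₀ hy₀ hmid hy₀mid hzero
  have hN0 : 0 < N := by linarith
  have hx₀N : x₀ ∈ Set.Icc 0 N := ⟨by linarith [hx₀.1], by linarith [hx₀.2]⟩
  have hKη : K ^ 2 * η ≤ 1 := by
    rw [lt_div_iff₀ (by positivity), mul_comm] at hηK; exact hηK.le
  have hη1 : √η ≤ 1 := sqrt_le_one.mpr (by nlinarith [one_le_pow₀ (n := 2) hK])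
  set s := |sin (2 * π * x₀ / N)| with hs_def
  have hs : 4 * √η / N ≤ s := four_mul_div_le_abs_sin_two_pi_mul_div hN0 (sqrt_nonneg η)
    (hη1.trans hx₀.1) (by linarith [hx₀.2]) hmid
  have hs0 : 0 < s := lt_of_lt_of_le (by positivity) hs
  have hεs : 4 * (K * η / N) ≤ s := by
    have := mul_le_sqrt_of_sq_mul_le_one hK0.le hη.le hKη
    calc 4 * (K * η / N) ≤ 4 * √η / N := by rw [mul_div_assoc']; gcongr
      _ ≤ s := hs
  have hB₀ := hB x₀ hx₀N y₀ hy₀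
  obtain ⟨hden, hslope⟩ := partial_bounds_at_zero_of_perturbed_mode (bx := Bx x₀ y₀)
    (by' := By x₀ y₀) hs0 hεs (hv₂ x₀ hx₀N)
    (hv₂' x₀ hx₀N) (half_le_abs_cos_two_pi_mul hy₀mid) hzero
    (by linarith [abs_nonneg (Bx x₀ y₀), abs_nonneg (By x₀ y₀)])
    (by linarith [abs_nonneg (B x₀ y₀), abs_nonneg (By x₀ y₀)])
    (by linarith [abs_nonneg (B x₀ y₀), abs_nonneg (Bx x₀ y₀)])
  rw [← hs_def] at hden hslope
  refine ⟨by rwa [one_mul], by rwa [one_mul], hslope.trans ?_⟩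
  calc _ = K * η / (N * s) + 4 / 3 * K ^ 2 * η / (N ^ 2 * s ^ 2) := by field_simp; ring
    _ ≤ 2 * K ^ 2 * η / (N * s) + 2 * K ^ 2 * η / (N ^ 2 * s ^ 2) := by gcongr <;> nlinarith
    _ = _ := by rw [sq_abs]
end

section
/- Let K ≥ 1 and N > 4. Suppose v : [0,N]×[0,1] → ℝ has the form v(x,y) = v₂(x)sin(2πy) + B(x,y), where |v₂(x) − sin(2πx/N)| ≤ Kη/N for all x ∈ [0,N], B(x,0) = 0 for all x ∈ [0,N], and |∂ᵧB(x,y)| ≤ Kη/N for all (x,y). Then there exist η₀ > 0 and C₂ depending only on K such that for all 0 < η < η₀, all x ∈ [0,N], and all y ∈ (0, 1/4]: if |sin(2πx/N)| ≥ C₂η/N, then v(x,y) ≠ 0. -/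
open Real

/-- Region-(b) estimate in the proof of Proposition 3.3: with
`v = v₂(x)sin(2πy) + B(x,y)` where `B(x,0) = 0` and `|∂ᵧB| ≤ Kη/N`, the
function `v` does not vanish for `y ∈ (0, 1/4]` whenever
`|sin(2πx/N)| ≥ C₂η/N`. -/
theorem stmt18 (K : ℝ) (hK : 1 ≤ K) :
    ∃ η₀ C₂ : ℝ, 0 < η₀ ∧ 0 < C₂ ∧
      ∀ (N η : ℝ) (v₂ : ℝ → ℝ) (B By : ℝ → ℝ → ℝ),
        4 < N → 0 < η → η < η₀ →
        (∀ x ∈ Set.Icc (0:ℝ) N, |v₂ x - Real.sin (2 * π * x / N)| ≤ K * η / N) →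
        (∀ x ∈ Set.Icc (0:ℝ) N, B x 0 = 0) →
        (∀ x ∈ Set.Icc (0:ℝ) N, ∀ y ∈ Set.Icc (0:ℝ) 1,
          HasDerivAt (fun t => B x t) (By x y) y) →
        (∀ x ∈ Set.Icc (0:ℝ) N, ∀ y ∈ Set.Icc (0:ℝ) 1, |By x y| ≤ K * η / N) →
        ∀ x ∈ Set.Icc (0:ℝ) N, ∀ y : ℝ, 0 < y → y ≤ 1 / 4 →
          C₂ * η / N ≤ |Real.sin (2 * π * x / N)| →
          v₂ x * Real.sin (2 * π * y) + B x y ≠ 0 := by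
  refine ⟨1, 2 * K, one_pos, by linarith, ?_⟩
  intro N η v₂ B By hN hη hη1 hv₂ hB0 hBd hBy x hx y hy0 hy14 hsin
  have hNpos : (0:ℝ) < N := by linarith
  have hKη : 0 < K * η / N := by positivity
  -- bound on |B x y| via MVT
  have hy1 : y ∈ Set.Icc (0:ℝ) 1 := ⟨hy0.le, by linarith⟩
  have hBbound : |B x y| ≤ K * η / N * y := by
    have := Convex.norm_image_sub_le_of_norm_hasDerivWithin_le
      (f := fun t => B x t) (f' := fun t => By x t) (C := K * η / N)
      (s := Set.Icc (0:ℝ) 1)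
      (fun t ht => (hBd x hx t ht).hasDerivWithinAt)
      (fun t ht => by simpa using hBy x hx t ht)
      (convex_Icc 0 1) (Set.left_mem_Icc.2 one_pos.le) hy1
    simpa [hB0 x hx, Real.norm_eq_abs, abs_of_nonneg hy0.le] using this
  -- sin(2πy) ≥ 4y
  have h2y : 0 ≤ 2 * π * y := by positivity
  have h2y' : 2 * π * y ≤ π / 2 := by
    nlinarith [pi_pos]
  have hsin4y : 4 * y ≤ Real.sin (2 * π * y) := by
    have := Real.mul_le_sin h2y h2y'
    have hπ : π ≠ 0 := pi_ne_zero
    calc 4 * y = 2 / π * (2 * π * y) := by field_simp; ring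
    _ ≤ Real.sin (2 * π * y) := this
  have hsinpos : 0 < Real.sin (2 * π * y) := lt_of_lt_of_le (by linarith) hsin4y
  -- lower bound on |v₂ x|
  have hv2 : K * η / N ≤ |v₂ x| := by
    have h1 := hv₂ x hx
    have h2 : |Real.sin (2 * π * x / N)| - |v₂ x - Real.sin (2 * π * x / N)| ≤ |v₂ x| := by
      have := abs_sub_abs_le_abs_sub (Real.sin (2 * π * x / N)) (v₂ x)
      rw [abs_sub_comm] at this
      linarith
    have h3 : 2 * K * η / N = 2 * (K * η / N) := by ring
    linarith [hsin]
  intro hcontra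
  have heq : |v₂ x * Real.sin (2 * π * y)| = |B x y| := by
    have : v₂ x * Real.sin (2 * π * y) = -B x y := by linarith
    rw [this, abs_neg]
  have hlhs : K * η / N * (4 * y) ≤ |v₂ x * Real.sin (2 * π * y)| := by
    rw [abs_mul, abs_of_pos hsinpos]
    exact mul_le_mul hv2 hsin4y (by linarith) (abs_nonneg _)
  nlinarith
end

section
/- Let K ≥ 1 and N, η > 0. Suppose B : ℝ → ℝ is three times continuously differentiable on [0, 1/4] with B(0) = 0, B''(0) = 0, and |B'(y)| ≤ Kη/N and |B'''(y)| ≤ Kη/N for all y ∈ [0, 1/4]. Suppose a ∈ ℝ and y₀ ∈ (0, 1/10] satisfy a·sin(2πy₀) + B(y₀) = 0. Then there is an absolute constant C such that |2πa·cos(2πy₀) + B'(y₀)| ≤ C·K·η·y₀²/N. -/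
/-!
Taylor expansion at `0`, with `B 0 = B'' 0 = 0` and `M = Kη/N`, gives `B y = B' 0 * y + O(M y³)`
and `B' y = B' 0 + O(M y²)`. Eliminating `a` through the nodal equation `a sin x = -B y₀`,
`x = 2πy₀`, writes `(2πa cos x + B' y₀) sin x` as `B' 0 (sin x - x cos x)` plus terms of size
`O(M y₀³)`; since `sin x - x cos x = O(x³)` and `sin x ≥ 4 y₀` (Jordan), dividing by `sin x`
gives `O(M y₀²)`.
-/

open Real

lemma abs_sub_le_mul_pow_of_abs_deriv_le {f f' : ℝ → ℝ} {b c : ℝ} (n : ℕ)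
    (hf : ∀ y ∈ Set.Icc 0 b, HasDerivAt f (f' y) y)
    (hf' : ∀ y ∈ Set.Icc 0 b, |f' y| ≤ c * y ^ n) :
    ∀ y ∈ Set.Icc 0 b, |f y - f 0| ≤ c * y ^ (n + 1) / (n + 1 : ℕ) := by
  have hg (y : ℝ) : HasDerivAt (fun y => c * y ^ (n + 1) / (n + 1 : ℕ)) (c * y ^ n) y := by
    refine (((hasDerivAt_pow (n + 1) y).const_mul c).div_const ((n + 1 : ℕ) : ℝ)).congr_deriv ?_
    field_simp
    simp
  intro y hy
  simpa [Real.norm_eq_abs] using image_norm_le_of_norm_deriv_right_le_deriv_boundary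
    (f := fun y => f y - f 0) (f' := f')
    (fun z hz => ((hf z hz).continuousAt.sub continuousAt_const).continuousWithinAt)
    (fun z hz => ((hf z (Set.Ico_subset_Icc_self hz)).sub_const (f 0)).hasDerivWithinAt)
    (by simp) hg (fun z hz => by simpa using hf' z (Set.Ico_subset_Icc_self hz)) hy

lemma abs_sin_sub_mul_cos_le {t : ℝ} (ht : 0 ≤ t) : |sin t - t * cos t| ≤ t ^ 3 / 3 := by
  have hderiv (s : ℝ) : HasDerivAt (fun s => sin s - s * cos s) (s * sin s) s := by
    refine ((hasDerivAt_sin s).sub ((hasDerivAt_id' s).mul (hasDerivAt_cos s))).congr_deriv ?_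
    ring
  have hbound (s : ℝ) (hs : s ∈ Set.Icc 0 t) : |s * sin s| ≤ 1 * s ^ 2 := by
    have hsin : |sin s| ≤ s := abs_sin_le_abs.trans_eq (abs_of_nonneg hs.1)
    rw [abs_mul, abs_of_nonneg hs.1, one_mul, sq]
    exact mul_le_mul_of_nonneg_left hsin hs.1
  simpa using abs_sub_le_mul_pow_of_abs_deriv_le 2 (fun s _ => hderiv s) hbound t ⟨ht, le_rfl⟩

lemma abs_deriv_sub_deriv_zero_le {f' f'' f''' : ℝ → ℝ} {b M : ℝ}
    (hf' : ∀ y ∈ Set.Icc 0 b, HasDerivAt f' (f'' y) y)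
    (hf'' : ∀ y ∈ Set.Icc 0 b, HasDerivAt f'' (f''' y) y) (hf''0 : f'' 0 = 0)
    (hf''' : ∀ y ∈ Set.Icc 0 b, |f''' y| ≤ M) :
    ∀ y ∈ Set.Icc 0 b, |f' y - f' 0| ≤ M * y ^ 2 / 2 := by
  have h₂ : ∀ y ∈ Set.Icc 0 b, |f'' y| ≤ M * y ^ 1 := by
    simpa [hf''0] using abs_sub_le_mul_pow_of_abs_deriv_le 0 hf'' (by simpa using hf''')
  simpa using abs_sub_le_mul_pow_of_abs_deriv_le 1 hf' h₂

lemma abs_sub_sub_deriv_zero_mul_le {f f' f'' f''' : ℝ → ℝ} {b M : ℝ}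
    (hf : ∀ y ∈ Set.Icc 0 b, HasDerivAt f (f' y) y)
    (hf' : ∀ y ∈ Set.Icc 0 b, HasDerivAt f' (f'' y) y)
    (hf'' : ∀ y ∈ Set.Icc 0 b, HasDerivAt f'' (f''' y) y) (hf''0 : f'' 0 = 0)
    (hf''' : ∀ y ∈ Set.Icc 0 b, |f''' y| ≤ M) :
    ∀ y ∈ Set.Icc 0 b, |f y - f 0 - f' 0 * y| ≤ M * y ^ 3 / 6 := by
  have hlin : ∀ y ∈ Set.Icc 0 b,
      HasDerivAt (fun y => f y - f' 0 * y) (f' y - f' 0) y := fun y hy => by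
    refine ((hf y hy).sub ((hasDerivAt_id' y).const_mul (f' 0))).congr_deriv ?_
    ring
  have h₂ : ∀ y ∈ Set.Icc 0 b, |f' y - f' 0| ≤ M / 2 * y ^ 2 := fun y hy => by
    linarith [abs_deriv_sub_deriv_zero_le hf' hf'' hf''0 hf''' y hy]
  intro y hy
  have h₃ := abs_sub_le_mul_pow_of_abs_deriv_le 2 hlin h₂ y hy
  simp only [mul_zero, sub_zero, sub_right_comm _ (f' 0 * y)] at h₃
  norm_num at h₃
  linarith

lemma abs_two_pi_mul_cos_add_mul_sin_le {a y b₁ u v M : ℝ} (hy : 0 ≤ y) (hy' : y ≤ 1 / 2)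
    (hb₁ : |b₁| ≤ M) (hu : |u - b₁ * y| ≤ M * y ^ 3 / 6) (hv : |v - b₁| ≤ M * y ^ 2 / 2)
    (hnode : a * sin (2 * π * y) + u = 0) :
    |2 * π * a * cos (2 * π * y) + v| * sin (2 * π * y) ≤ 176 * M * y ^ 3 := by
  set x := 2 * π * y with hx
  have hM : 0 ≤ M := (abs_nonneg _).trans hb₁
  have hx0 : 0 ≤ x := by positivity
  have hsin : 0 ≤ sin x := sin_nonneg_of_nonneg_of_le_pi hx0 (by nlinarith [pi_pos])
  have hkey : (2 * π * a * cos x + v) * sin x =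
      b₁ * (sin x - x * cos x) - 2 * π * cos x * (u - b₁ * y) + (v - b₁) * sin x := by
    linear_combination (2 * π * cos x) * hnode
  have e₁ : |b₁ * (sin x - x * cos x)| ≤ M * (x ^ 3 / 3) := by
    rw [abs_mul]
    exact mul_le_mul hb₁ (abs_sin_sub_mul_cos_le hx0) (abs_nonneg _) hM
  have e₂ : |2 * π * cos x * (u - b₁ * y)| ≤ 2 * π * (M * y ^ 3 / 6) := by
    rw [abs_mul, abs_mul, abs_of_pos two_pi_pos, mul_assoc]
    gcongr
    simpa using mul_le_mul (abs_cos_le_one x) hu (abs_nonneg _) zero_le_one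
  have e₃ : |(v - b₁) * sin x| ≤ M * y ^ 2 / 2 * x := by
    rw [abs_mul, abs_of_nonneg hsin]
    exact mul_le_mul hv (sin_le hx0) hsin (by positivity)
  have hπ : 8 * π ^ 3 / 3 + π / 3 + π ≤ 176 := by
    nlinarith [pi_pos, pi_le_four, sq_nonneg π]
  calc |2 * π * a * cos x + v| * sin x = |(2 * π * a * cos x + v) * sin x| := by
        rw [abs_mul, abs_of_nonneg hsin]
    _ ≤ M * (x ^ 3 / 3) + 2 * π * (M * y ^ 3 / 6) + M * y ^ 2 / 2 * x := by
        rw [hkey]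
        linarith [abs_add_le (b₁ * (sin x - x * cos x) - 2 * π * cos x * (u - b₁ * y))
          ((v - b₁) * sin x), abs_sub (b₁ * (sin x - x * cos x)) (2 * π * cos x * (u - b₁ * y))]
    _ = M * y ^ 3 * (8 * π ^ 3 / 3 + π / 3 + π) := by ring
    _ ≤ M * y ^ 3 * 176 := by gcongr
    _ = 176 * M * y ^ 3 := by ring

lemma abs_two_pi_mul_cos_add_le {a y b₁ u v M : ℝ} (hy : 0 < y) (hy' : y ≤ 1 / 4)
    (hb₁ : |b₁| ≤ M) (hu : |u - b₁ * y| ≤ M * y ^ 3 / 6) (hv : |v - b₁| ≤ M * y ^ 2 / 2)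
    (hnode : a * sin (2 * π * y) + u = 0) :
    |2 * π * a * cos (2 * π * y) + v| ≤ 44 * M * y ^ 2 := by
  have hsin : 4 * y ≤ sin (2 * π * y) := by
    convert le_sin_mul (x := 4 * y) (by positivity) (by linarith) using 2
    ring
  refine le_of_mul_le_mul_right ?_ (by positivity : 0 < 4 * y)
  calc |2 * π * a * cos (2 * π * y) + v| * (4 * y)
      ≤ |2 * π * a * cos (2 * π * y) + v| * sin (2 * π * y) := by gcongr
    _ ≤ 176 * M * y ^ 3 :=
        abs_two_pi_mul_cos_add_mul_sin_le hy.le (by linarith) hb₁ hu hv hnode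
    _ = 44 * M * y ^ 2 * (4 * y) := by ring

/-- Key estimate in the proof of Proposition 4.4: if `B` is `C³` on `[0,1/4]`
with `B(0) = 0`, `B''(0) = 0`, `|B'| ≤ Kη/N`, `|B'''| ≤ Kη/N`, and
`a sin(2πy₀) + B(y₀) = 0` with `y₀ ∈ (0, 1/10]`, then
`|2πa cos(2πy₀) + B'(y₀)| ≤ CKηy₀²/N`. -/
theorem stmt19 : ∃ C : ℝ, 0 < C ∧
    ∀ (K N η a y₀ : ℝ) (B B' B'' B''' : ℝ → ℝ),
      1 ≤ K → 0 < N → 0 < η →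
      (∀ y ∈ Set.Icc (0:ℝ) (1/4), HasDerivAt B (B' y) y) →
      (∀ y ∈ Set.Icc (0:ℝ) (1/4), HasDerivAt B' (B'' y) y) →
      (∀ y ∈ Set.Icc (0:ℝ) (1/4), HasDerivAt B'' (B''' y) y) →
      ContinuousOn B''' (Set.Icc (0:ℝ) (1/4)) →
      B 0 = 0 → B'' 0 = 0 →
      (∀ y ∈ Set.Icc (0:ℝ) (1/4), |B' y| ≤ K * η / N) →
      (∀ y ∈ Set.Icc (0:ℝ) (1/4), |B''' y| ≤ K * η / N) →
      0 < y₀ → y₀ ≤ 1 / 10 →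
      a * Real.sin (2 * π * y₀) + B y₀ = 0 →
      |2 * π * a * Real.cos (2 * π * y₀) + B' y₀| ≤ C * K * η * y₀ ^ 2 / N := by
  refine ⟨44, by norm_num, ?_⟩
  intro K N η a y₀ B B' B'' B''' _ _ _ hB hB' hB'' _ hB0 hB''0 hB'bd hB'''bd hy₀ hy₀' hnode
  have hy₀mem : y₀ ∈ Set.Icc (0 : ℝ) (1 / 4) := ⟨hy₀.le, by linarith⟩
  have hu := abs_sub_sub_deriv_zero_mul_le hB hB' hB'' hB''0 hB'''bd y₀ hy₀mem
  rw [hB0, sub_zero] at hu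
  have hv := abs_deriv_sub_deriv_zero_le hB' hB'' hB''0 hB'''bd y₀ hy₀mem
  have hb₁ := hB'bd 0 ⟨le_rfl, by norm_num⟩
  calc |2 * π * a * cos (2 * π * y₀) + B' y₀| ≤ 44 * (K * η / N) * y₀ ^ 2 :=
        abs_two_pi_mul_cos_add_le hy₀ (by linarith) hb₁ hu hv hnode
    _ = 44 * K * η * y₀ ^ 2 / N := by ring
end
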